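/- arXiv:1510.02628 — 3 statements merged into one kernel-verified Lean document; each statement's English description precedes it below -/
import Mathlib

section
/- For every integer n ≥ 2 and every triangulation Δ of [n], the triangle group 𝕋_Δ is a free group of rank 3n−4; that is, 𝕋_Δ is isomorphic to the free group on 3n−4 generators. -/
open scoped Classical

noncomputable section

namespace NCPolygon

/-- Cyclic successor on `Fin n` (the vertices of the `n`-gon in cyclic order). -/
def csucc {n : ℕ} (i : Fin n) : Fin n :=
  ⟨(i.1 + 1) % n, Nat.mod_lt _ (Nat.lt_of_le_of_lt (Nat.zero_le _) i.isLt)⟩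

/-- Cyclic predecessor on `Fin n`. -/
def cpred {n : ℕ} (i : Fin n) : Fin n :=
  ⟨(i.1 + (n - 1)) % n, Nat.mod_lt _ (Nat.lt_of_le_of_lt (Nat.zero_le _) i.isLt)⟩

/-- A list of elements of `Fin n` is *cyclic* if its entries are distinct and some
cyclic rotation of it is strictly increasing. -/
def IsCyclicSeq {n : ℕ} (l : List (Fin n)) : Prop :=
  l.Nodup ∧ ∃ k : ℕ, (l.rotate k).Pairwise (· < ·)

/-- The pair `(i,k)` crosses `(j,l)` iff `(i,j,k,l)` is cyclic. -/
def Crosses {n : ℕ} (p q : Fin n × Fin n) : Prop :=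
  IsCyclicSeq [p.1, q.1, p.2, q.2]

def NonCrossing {n : ℕ} (Δ : Set (Fin n × Fin n)) : Prop :=
  (∀ p ∈ Δ, p.1 ≠ p.2) ∧ ∀ p ∈ Δ, ∀ q ∈ Δ, ¬ Crosses p q

/-- A triangulation of the `n`-gon: a maximal crossing-free set of (directed) chords. -/
def IsTriangulation {n : ℕ} (Δ : Set (Fin n × Fin n)) : Prop :=
  NonCrossing Δ ∧ ∀ Δ' : Set (Fin n × Fin n), NonCrossing Δ' → Δ ⊆ Δ' → Δ' = Δ

/-! ### The noncommutative polygon algebra `𝒜_n` -/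

abbrev OffD (n : ℕ) := {p : Fin n × Fin n // p.1 ≠ p.2}

abbrev AGen (n : ℕ) := OffD n ⊕ OffD n

def xF {n : ℕ} (i j : Fin n) : FreeAlgebra ℚ (AGen n) :=
  if h : i ≠ j then FreeAlgebra.ι ℚ (Sum.inl ⟨(i, j), h⟩) else 1

def xiF {n : ℕ} (i j : Fin n) : FreeAlgebra ℚ (AGen n) :=
  if h : i ≠ j then FreeAlgebra.ι ℚ (Sum.inr ⟨(i, j), h⟩) else 1

/-- The defining relations of `𝒜_n`: invertibility, triangle, and exchange relations. -/
inductive ARel (n : ℕ) : FreeAlgebra ℚ (AGen n) → FreeAlgebra ℚ (AGen n) → Prop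
  | mul_inv {i j : Fin n} (h : i ≠ j) : ARel n (xF i j * xiF i j) 1
  | inv_mul {i j : Fin n} (h : i ≠ j) : ARel n (xiF i j * xF i j) 1
  | triangle {i j k : Fin n} (hij : i ≠ j) (hik : i ≠ k) (hjk : j ≠ k) :
      ARel n (xF i j * xiF k j * xF k i) (xF i k * xiF j k * xF j i)
  | exchange {i j k l : Fin n} (h : IsCyclicSeq [i, j, k, l]) :
      ARel n (xF j l) (xF j k * xiF i k * xF i l + xF j i * xiF k i * xF k l)

/-- The noncommutative `n`-gon algebra `𝒜_n`. -/
abbrev NCPoly (n : ℕ) := RingQuot (ARel n)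

/-- The generator `x_{ij} ∈ 𝒜_n` (junk value `1` when `i = j`). -/
def X {n : ℕ} (i j : Fin n) : NCPoly n :=
  RingQuot.mkAlgHom ℚ (ARel n) (xF i j)

/-- The generator `x_{ij}⁻¹ ∈ 𝒜_n`. -/
def Xinv {n : ℕ} (i j : Fin n) : NCPoly n :=
  RingQuot.mkAlgHom ℚ (ARel n) (xiF i j)

/-- The noncommutative angle `T_i^{jk} = x_{ji}⁻¹ x_{jk} x_{ik}⁻¹ ∈ 𝒜_n`. -/
def Tang {n : ℕ} (i j k : Fin n) : NCPoly n := Xinv j i * X j k * Xinv i k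

/-! ### Triangle groups -/

def tF {n : ℕ} (Δ : Set (Fin n × Fin n)) (i j : Fin n) : FreeGroup Δ :=
  if h : (i, j) ∈ Δ then FreeGroup.of (⟨(i, j), h⟩ : Δ) else 1

/-- The triangle relations of the triangle group `𝕋_Δ`. -/
def triRels {n : ℕ} (Δ : Set (Fin n × Fin n)) : Set (FreeGroup Δ) :=
  { w | ∃ i j k : Fin n, i ≠ j ∧ i ≠ k ∧ j ≠ k ∧
      (i, j) ∈ Δ ∧ (j, i) ∈ Δ ∧ (i, k) ∈ Δ ∧ (k, i) ∈ Δ ∧ (j, k) ∈ Δ ∧ (k, j) ∈ Δ ∧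
      w = tF Δ i j * (tF Δ k j)⁻¹ * tF Δ k i *
        (tF Δ i k * (tF Δ j k)⁻¹ * tF Δ j i)⁻¹ }

/-- The triangle group `𝕋_Δ` of a triangulation `Δ`. -/
abbrev TriGroup {n : ℕ} (Δ : Set (Fin n × Fin n)) := PresentedGroup (triRels Δ)

/-- The generator `t_{ij} ∈ 𝕋_Δ` (junk value `1` when `(i,j) ∉ Δ`). -/
def tG {n : ℕ} (Δ : Set (Fin n × Fin n)) (i j : Fin n) : TriGroup Δ :=
  if h : (i, j) ∈ Δ then PresentedGroup.of (rels := triRels Δ) ⟨(i, j), h⟩ else 1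

/-! ### The big triangle group `𝕋_n` -/

def btF {n : ℕ} (i j : Fin n) : FreeGroup (OffD n) :=
  if h : i ≠ j then FreeGroup.of (⟨(i, j), h⟩ : OffD n) else 1

def bigRels (n : ℕ) : Set (FreeGroup (OffD n)) :=
  { w | ∃ i j k : Fin n, i ≠ j ∧ i ≠ k ∧ j ≠ k ∧
      w = btF i j * (btF k j)⁻¹ * btF k i * (btF i k * (btF j k)⁻¹ * btF j i)⁻¹ }

/-- The big triangle group `𝕋_n`. -/
abbrev BigTriGroup (n : ℕ) := PresentedGroup (bigRels n)

/-- The generator `t_{ij} ∈ 𝕋_n`. -/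
def bigT {n : ℕ} (i j : Fin n) : BigTriGroup n :=
  if h : i ≠ j then PresentedGroup.of (rels := bigRels n) ⟨(i, j), h⟩ else 1

/-! ### Distinguished subalgebras and subgroups -/

/-- `𝒜_Δ`: the subalgebra of `𝒜_n` generated by all `x_{ij}` together with the
`x_{ij}⁻¹` for `(i,j) ∈ Δ`. -/
def ADelta (n : ℕ) (Δ : Set (Fin n × Fin n)) : Subalgebra ℚ (NCPoly n) :=
  Algebra.adjoin ℚ
    ({a | ∃ i j : Fin n, i ≠ j ∧ a = X i j} ∪ {a | ∃ p ∈ Δ, a = Xinv p.1 p.2})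

/-- `𝒬_n`: the subalgebra of `𝒜_n` generated by the `y_{ij}^k = x_{ki}⁻¹ x_{kj}`. -/
def Qn (n : ℕ) : Subalgebra ℚ (NCPoly n) :=
  Algebra.adjoin ℚ
    {a : NCPoly n | ∃ i j k : Fin n, i ≠ j ∧ i ≠ k ∧ j ≠ k ∧ a = Xinv k i * X k j}

/-- `𝕌_Δ`: the subgroup of `𝕋_Δ` generated by the `u_{ij}^k = t_{ki}⁻¹ t_{kj}`. -/
def UDelta {n : ℕ} (Δ : Set (Fin n × Fin n)) : Subgroup (TriGroup Δ) :=
  Subgroup.closure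
    {g | ∃ i j k : Fin n, (k, i) ∈ Δ ∧ (k, j) ∈ Δ ∧ g = (tG Δ k i)⁻¹ * tG Δ k j}

/-!
Induction on `n` by cutting off an ear. For `n ≥ 3` a triangulation `Δ` has an ear: a vertex `v`
whose only chords go to its two neighbours `p` and `s`, so that `(p, s) ∈ Δ`. Deleting `v`
leaves a triangulation `Δ'` of the `(n-1)`-gon, and the only triangle of `Δ` through `v` is
`p v s`. Its relation can be solved for `t_vp`, so `𝕋_Δ ≅ 𝕋_Δ' ∗ F(t_pv, t_vs, t_sv)`: each
vertex adds three free generators to the two of the `2`-gon, whose triangle group has no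
relations.
-/

section CyclicOrder

variable {n : ℕ}

def gap (x y : Fin n) : ℕ := if x.val ≤ y.val then y.val - x.val else y.val + n - x.val

lemma gap_spec (x y : Fin n) :
    (x.val ≤ y.val ∧ x.val + gap x y = y.val) ∨ (y.val < x.val ∧ x.val + gap x y = y.val + n) := by
  have := x.isLt
  unfold gap; split_ifs <;> omega

@[simp] lemma gap_self (x : Fin n) : gap x x = 0 := by simp [gap]

lemma gap_injective (x : Fin n) : Function.Injective (gap x) := by
  intro y z h
  have := y.isLt; have := z.isLt
  rcases gap_spec x y with hy | hy <;> rcases gap_spec x z with hz | hz <;>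
    exact Fin.ext (by omega)

lemma isCyclicSeq_iff_gap {a b c d : Fin n} :
    IsCyclicSeq [a, b, c, d] ↔ 0 < gap a b ∧ gap a b < gap a c ∧ gap a c < gap a d := by
  let l := [a, b, c, d]
  have hex : (∃ k, (l.rotate k).Pairwise (· < ·)) ↔ l.Pairwise (· < ·) ∨
      (l.rotate 1).Pairwise (· < ·) ∨ (l.rotate 2).Pairwise (· < ·) ∨
      (l.rotate 3).Pairwise (· < ·) := by
    refine ⟨fun ⟨k, hk⟩ => ?_, by rintro (h | h | h | h); exacts [⟨0, h⟩, ⟨1, h⟩, ⟨2, h⟩, ⟨3, h⟩]⟩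
    rw [← List.rotate_mod] at hk
    obtain h | h | h | h : k % 4 = 0 ∨ k % 4 = 1 ∨ k % 4 = 2 ∨ k % 4 = 3 := by omega
    all_goals (simp only [l, List.length_cons, List.length_nil] at hk; rw [h] at hk; tauto)
  have := a.isLt; have := b.isLt; have := c.isLt; have := d.isLt
  have := gap_spec a b; have := gap_spec a c; have := gap_spec a d
  rw [IsCyclicSeq, hex]
  simp only [l, List.rotate_cons_succ, List.rotate_zero, List.nodup_cons, List.mem_cons,
    List.pairwise_cons, List.not_mem_nil, List.nodup_nil, List.Pairwise.nil, forall_eq_or_imp,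
    forall_eq, or_false, false_implies, implies_true, and_true, not_or, List.cons_append,
    List.nil_append, not_false_eq_true]
  simp only [Fin.ext_iff, Fin.lt_def]
  constructor <;> intro h <;> omega

lemma gap_add_gap {x y z : Fin n} (h : gap x y + gap y z < n) :
    gap x z = gap x y + gap y z := by
  have := x.isLt; have := y.isLt; have := z.isLt
  have := gap_spec x y; have := gap_spec y z; have := gap_spec x z
  omega

lemma gap_add_gap_of_le {x y z : Fin n} (h : gap x y ≤ gap x z) :
    gap x y + gap y z = gap x z := by
  have := x.isLt; have := y.isLt; have := z.isLt
  have := gap_spec x y; have := gap_spec y z; have := gap_spec x z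
  omega

lemma gap_add_gap_swap {x y : Fin n} (h : x ≠ y) : gap x y + gap y x = n := by
  have := x.isLt; have := y.isLt; have := gap_spec x y; have := gap_spec y x
  rw [Ne, Fin.ext_iff] at h
  omega

lemma gap_csucc (hn : 2 ≤ n) (x : Fin n) : gap x (csucc x) = 1 := by
  have := x.isLt
  have hval : (csucc x).val = if x.val + 1 < n then x.val + 1 else 0 := by
    simp only [csucc]
    split_ifs with h
    · exact Nat.mod_eq_of_lt h
    · rw [show x.val + 1 = n by omega, Nat.mod_self]
  have := gap_spec x (csucc x)
  split_ifs at hval <;> omega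

lemma IsCyclicSeq.rotate {l : List (Fin n)} (h : IsCyclicSeq l) (k : ℕ) :
    IsCyclicSeq (l.rotate k) := by
  obtain ⟨hl, j, hj⟩ := h
  obtain ⟨i, hi⟩ : l.rotate k ~r l.rotate j :=
    (show l ~r l.rotate k from ⟨k, rfl⟩).symm.trans ⟨j, rfl⟩
  exact ⟨List.nodup_rotate.2 hl, i, hi ▸ hj⟩

lemma Crosses.symm {p q : Fin n × Fin n} (h : Crosses p q) : Crosses q p.swap :=
  IsCyclicSeq.rotate h 1

lemma Crosses.swap {p q : Fin n × Fin n} (h : Crosses p q) : Crosses p.swap q.swap :=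
  IsCyclicSeq.rotate h 2

lemma crosses_map_iff {m : ℕ} {f : Fin m → Fin n} (hf : StrictMono f) (p q : Fin m × Fin m) :
    Crosses (Prod.map f f p) (Prod.map f f q) ↔ Crosses p q := by
  change IsCyclicSeq ([p.1, q.1, p.2, q.2].map f) ↔ IsCyclicSeq [p.1, q.1, p.2, q.2]
  simp only [IsCyclicSeq, List.nodup_map_iff hf.injective, ← List.map_rotate, List.pairwise_map,
    hf.lt_iff_lt]

def IsSide (e : Fin n × Fin n) : Prop := gap e.1 e.2 = 1 ∨ gap e.2 e.1 = 1

lemma not_crosses_of_gap_eq_one {x y : Fin n} (h : gap x y = 1) (q : Fin n × Fin n) :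
    ¬Crosses (x, y) q := by
  rw [Crosses, isCyclicSeq_iff_gap]
  dsimp only
  omega

lemma IsSide.fst_ne_snd {e : Fin n × Fin n} (h : IsSide e) : e.1 ≠ e.2 := by
  intro he; rcases h with h | h <;> simp [he] at h

lemma IsSide.not_crosses {e : Fin n × Fin n} (h : IsSide e) (q : Fin n × Fin n) :
    ¬Crosses e q ∧ ¬Crosses q e := by
  obtain ⟨x, y⟩ := e
  rcases h with h | h
  · exact ⟨not_crosses_of_gap_eq_one h q, fun hq => not_crosses_of_gap_eq_one h _ hq.symm⟩
  · exact ⟨fun hq => not_crosses_of_gap_eq_one h _ hq.swap,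
      fun hq => not_crosses_of_gap_eq_one h _ hq.symm.swap⟩

end CyclicOrder

section Triangulation

variable {n : ℕ}

namespace IsTriangulation

variable {Δ : Set (Fin n × Fin n)} (hΔ : IsTriangulation Δ)
include hΔ

lemma fst_ne_snd {e : Fin n × Fin n} (he : e ∈ Δ) : e.1 ≠ e.2 := hΔ.1.1 e he

lemma mem_of_forall_not_crosses {e : Fin n × Fin n} (he : e.1 ≠ e.2)
    (h : ∀ q ∈ Δ, ¬Crosses e q ∧ ¬Crosses q e) : e ∈ Δ := by
  have hee : ¬Crosses e e := fun hc => by simpa using hc.1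
  have hnc : NonCrossing (insert e Δ) := by
    refine ⟨?_, ?_⟩
    · rintro q (rfl | hq)
      exacts [he, hΔ.fst_ne_snd hq]
    · rintro q (rfl | hq) r (rfl | hr)
      exacts [hee, (h r hr).1, (h q hq).2, hΔ.1.2 q hq r hr]
  rw [← hΔ.2 _ hnc (Set.subset_insert _ _)]
  exact Set.mem_insert _ _

lemma swap_mem {e : Fin n × Fin n} (he : e ∈ Δ) : e.swap ∈ Δ :=
  hΔ.mem_of_forall_not_crosses (fun h => hΔ.fst_ne_snd he h.symm) fun q hq =>
    ⟨fun hc => hΔ.1.2 q hq e he (by simpa using hc.symm),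
      fun hc => hΔ.1.2 e he q hq (by simpa using hc.symm.swap)⟩

lemma mem_of_forall_not_crosses' {e : Fin n × Fin n} (he : e.1 ≠ e.2)
    (h : ∀ q ∈ Δ, ¬Crosses e q) : e ∈ Δ :=
  hΔ.mem_of_forall_not_crosses he fun q hq => ⟨h q hq, fun hc => h _ (hΔ.swap_mem hq) hc.symm⟩

lemma mem_of_isSide {e : Fin n × Fin n} (h : IsSide e) : e ∈ Δ :=
  hΔ.mem_of_forall_not_crosses h.fst_ne_snd fun q _ => h.not_crosses q

end IsTriangulation

structure IsEar (Δ : Set (Fin n × Fin n)) (p v s : Fin n) : Prop where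
  gap_left : gap p v = 1
  gap_right : gap v s = 1
  diagonal_mem : (p, s) ∈ Δ
  eq_or_eq_of_mem : ∀ x, (v, x) ∈ Δ → x = p ∨ x = s

variable {Δ : Set (Fin n × Fin n)} {p v s : Fin n}

lemma IsEar.left_ne (h : IsEar Δ p v s) : p ≠ v :=
  fun e => by simpa [e] using h.gap_left

lemma IsEar.right_ne (h : IsEar Δ p v s) : s ≠ v :=
  fun e => by simpa [e] using h.gap_right

lemma IsTriangulation.diagonal_mem (hΔ : IsTriangulation Δ) (hpv : gap p v = 1)
    (hps : gap p s = 2) (nbr : ∀ x, (v, x) ∈ Δ → x = p ∨ x = s) : (p, s) ∈ Δ := by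
  refine hΔ.mem_of_forall_not_crosses' (fun h : p = s => by simp [h] at hps) ?_
  rintro ⟨c, d⟩ hcd hc
  rw [Crosses, isCyclicSeq_iff_gap] at hc
  dsimp only at hc
  obtain rfl : c = v := gap_injective p (by omega)
  have := gap_self p
  rcases nbr d hcd with rfl | rfl <;> omega

/-- Take `v` right after an endpoint `p` of a shortest chord `(p, q)` with `gap p q ≥ 2`: any
other chord at `v` would be shorter than `(p, q)` or cross it. -/
theorem IsTriangulation.exists_isEar (hΔ : IsTriangulation Δ) (hn : 3 ≤ n) :
    ∃ p v s, IsEar Δ p v s := by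
  let o : Fin n := ⟨0, by omega⟩
  have ho : gap o (csucc o) = 1 := gap_csucc (by omega) o
  have hside : (csucc o, o) ∈ Δ := hΔ.mem_of_isSide (Or.inr ho)
  have hgap : gap (csucc o) o + 1 = n := ho ▸ gap_add_gap_swap (hΔ.fst_ne_snd hside)
  obtain ⟨⟨p, q⟩, ⟨hpq, hpq2 : 2 ≤ gap p q⟩, hmin⟩ :=
    Set.exists_min_image {e ∈ Δ | 2 ≤ gap e.1 e.2} (fun e => gap e.1 e.2) (Set.toFinite _)
      ⟨_, hside, show 2 ≤ gap (csucc o) o by omega⟩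
  set v := csucc p
  set s := csucc v
  have hpv : gap p v = 1 := gap_csucc (by omega) p
  have hvs : gap v s = 1 := gap_csucc (by omega) v
  have hps : gap p s = 2 := by rw [gap_add_gap (y := v)] <;> omega
  have nbr : ∀ x, (v, x) ∈ Δ → x = p ∨ x = s := by
    intro x hvx
    by_contra! hx
    have hvx0 : gap v x ≠ 0 := fun h0 =>
      hΔ.fst_ne_snd hvx (gap_injective v (h0.trans (gap_self v).symm)).symm
    have hvx1 : gap v x ≠ 1 := fun h1 => hx.2 (gap_injective v (h1.trans hvs.symm))
    have hpx0 : gap p x ≠ 0 := fun h0 => hx.1 (gap_injective p (h0.trans (gap_self p).symm))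
    have hpx : 1 + gap v x = gap p x := hpv ▸ gap_add_gap_of_le (by omega)
    by_cases hle : gap p x ≤ gap p q
    · have : gap p q ≤ gap v x := hmin (v, x) ⟨hvx, show 2 ≤ gap v x by omega⟩
      omega
    · exact hΔ.1.2 _ hpq _ hvx <|
        (isCyclicSeq_iff_gap (a := p) (b := v) (c := q) (d := x)).2 ⟨by omega, by omega, by omega⟩
  exact ⟨p, v, s, hpv, hvs, hΔ.diagonal_mem hpv hps nbr, nbr⟩

lemma IsEar.isSide (hΔ : IsTriangulation Δ) (h : IsEar Δ p v s) {e : Fin n × Fin n}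
    (he : e ∈ Δ) (hv : e.1 = v ∨ e.2 = v) : IsSide e := by
  obtain ⟨x, y⟩ := e
  rcases hv with rfl | rfl
  · rcases h.eq_or_eq_of_mem y he with rfl | rfl
    exacts [Or.inr h.gap_left, Or.inl h.gap_right]
  · rcases h.eq_or_eq_of_mem x (hΔ.swap_mem he) with rfl | rfl
    exacts [Or.inl h.gap_left, Or.inr h.gap_right]

lemma NonCrossing.preimage {m : ℕ} {f : Fin m → Fin n}
    (hf : StrictMono f) (h : NonCrossing Δ) : NonCrossing (Prod.map f f ⁻¹' Δ) :=
  ⟨fun _ he h' => h.1 _ he (congrArg f h'),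
    fun e he q hq hc => h.2 _ he _ hq ((crosses_map_iff hf e q).2 hc)⟩

def deleteVertex {m : ℕ} (v : Fin (m + 1)) (Δ : Set (Fin (m + 1) × Fin (m + 1))) :
    Set (Fin m × Fin m) :=
  Prod.map v.succAbove v.succAbove ⁻¹' Δ

theorem IsEar.isTriangulation_deleteVertex {m : ℕ} {Δ : Set (Fin (m + 1) × Fin (m + 1))}
    {p v s : Fin (m + 1)} (hΔ : IsTriangulation Δ) (h : IsEar Δ p v s) :
    IsTriangulation (deleteVertex v Δ) := by
  have hmono := Fin.strictMono_succAbove v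
  refine ⟨hΔ.1.preimage hmono, fun Δ'' hnc hsub => ?_⟩
  set f := Prod.map v.succAbove v.succAbove
  set L := f '' Δ'' ∪ {e ∈ Δ | IsSide e}
  have hL : NonCrossing L := by
    refine ⟨?_, ?_⟩
    · rintro _ (⟨e, he, rfl⟩ | ⟨-, hside⟩)
      exacts [fun h' => hnc.1 e he (hmono.injective h'), hside.fst_ne_snd]
    · rintro _ (⟨e, he, rfl⟩ | ⟨-, hside⟩) _ (⟨e', he', rfl⟩ | ⟨-, hside'⟩)
      exacts [(crosses_map_iff hmono e e').not.2 (hnc.2 e he e' he'),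
        (hside'.not_crosses _).2, (hside.not_crosses _).1, (hside.not_crosses _).1]
  have hΔL : Δ ⊆ L := by
    rintro ⟨x, y⟩ hxy
    by_cases hv : x = v ∨ y = v
    · exact Or.inr ⟨hxy, h.isSide hΔ hxy hv⟩
    · rw [not_or] at hv
      obtain ⟨x', rfl⟩ := Fin.exists_succAbove_eq hv.1
      obtain ⟨y', rfl⟩ := Fin.exists_succAbove_eq hv.2
      exact Or.inl ⟨(x', y'), hsub hxy, rfl⟩
  have hLΔ := hΔ.2 L hL hΔL
  refine Set.Subset.antisymm (fun e he => ?_) hsub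
  change f e ∈ Δ
  exact hLΔ ▸ Or.inl ⟨e, he, rfl⟩

end Triangulation

section TriangleRelations

variable {n : ℕ}

def TriRel {G ι : Type*} [Group G] (t : ι → ι → G) (i j k : ι) : Prop :=
  t i j * (t k j)⁻¹ * t k i = t i k * (t j k)⁻¹ * t j i

namespace TriRel

variable {G ι : Type*} [Group G] {t : ι → ι → G} {i j k : ι}

lemma swap (h : TriRel t i j k) : TriRel t i k j := h.symm

lemma rotate (h : TriRel t i j k) : TriRel t j k i := by
  unfold TriRel at *
  calc t j k * (t i k)⁻¹ * t i j
      = t j k * (t i k)⁻¹ * (t i j * (t k j)⁻¹ * t k i) * (t k i)⁻¹ * t k j := by group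
    _ = t j i * (t k i)⁻¹ * t k j := by rw [h]; group

lemma map {H : Type*} [Group H] (φ : G →* H) (h : TriRel t i j k) :
    TriRel (fun a b => φ (t a b)) i j k := by
  unfold TriRel at *
  simp only [← map_inv, ← map_mul, h]

lemma of_mem_triple {a b c : ι} (h : TriRel t a b c) (hi : i = a ∨ i = b ∨ i = c)
    (hj : j = a ∨ j = b ∨ j = c) (hk : k = a ∨ k = b ∨ k = c) (hij : i ≠ j) (hik : i ≠ k)
    (hjk : j ≠ k) : TriRel t i j k := by
  rcases hi with rfl | rfl | rfl <;> rcases hj with rfl | rfl | rfl <;>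
    rcases hk with rfl | rfl | rfl <;>
    first
    | exact absurd rfl hij | exact absurd rfl hik | exact absurd rfl hjk
    | exact h | exact h.swap | exact h.rotate | exact h.rotate.swap | exact h.rotate.rotate
    | exact h.rotate.rotate.swap

lemma solve (h : TriRel t i j k) :
    t j k * (t i k)⁻¹ * t i j * (t k j)⁻¹ * t k i = t j i := by
  calc t j k * (t i k)⁻¹ * t i j * (t k j)⁻¹ * t k i
      = t j k * (t i k)⁻¹ * (t i j * (t k j)⁻¹ * t k i) := by group
    _ = t j i := by rw [h]; group

end TriRel

def IsTriangle (Δ : Set (Fin n × Fin n)) (i j k : Fin n) : Prop :=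
  i ≠ j ∧ i ≠ k ∧ j ≠ k ∧ (i, j) ∈ Δ ∧ (j, i) ∈ Δ ∧ (i, k) ∈ Δ ∧ (k, i) ∈ Δ ∧ (j, k) ∈ Δ ∧
    (k, j) ∈ Δ

variable {Δ : Set (Fin n × Fin n)} {p v s : Fin n}

lemma IsEar.isTriangle (hΔ : IsTriangulation Δ)
    (h : IsEar Δ p v s) : IsTriangle Δ p v s :=
  have hps := hΔ.fst_ne_snd h.diagonal_mem
  ⟨h.left_ne, hps, h.right_ne.symm,
    hΔ.mem_of_isSide (Or.inl h.gap_left), hΔ.mem_of_isSide (Or.inr h.gap_left),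
    h.diagonal_mem, hΔ.swap_mem h.diagonal_mem,
    hΔ.mem_of_isSide (Or.inl h.gap_right), hΔ.mem_of_isSide (Or.inr h.gap_right)⟩

lemma IsEar.mem_of_isTriangle {i j k : Fin n}
    (hΔ : IsTriangulation Δ) (h : IsEar Δ p v s) (ht : IsTriangle Δ i j k)
    (hv : i = v ∨ j = v ∨ k = v) :
    (i = p ∨ i = v ∨ i = s) ∧ (j = p ∨ j = v ∨ j = s) ∧ (k = p ∨ k = v ∨ k = s) := by
  have nbr : ∀ x, (v, x) ∈ Δ → x = p ∨ x = v ∨ x = s := fun x hx =>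
    (h.eq_or_eq_of_mem x hx).imp_right Or.inr
  obtain ⟨-, -, -, h1, h2, h3, -, h5, -⟩ := ht
  rcases hv with rfl | rfl | rfl
  · exact ⟨Or.inr (Or.inl rfl), nbr j h1, nbr k h3⟩
  · exact ⟨nbr i h2, Or.inr (Or.inl rfl), nbr k h5⟩
  · exact ⟨nbr i (hΔ.swap_mem h3), nbr j (hΔ.swap_mem h5), Or.inr (Or.inl rfl)⟩

end TriangleRelations

section TriangleGroups

variable {n : ℕ}

namespace TriGroup

variable {Δ : Set (Fin n × Fin n)} {G : Type*} [Group G]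

lemma tG_of_mem {i j : Fin n} (h : (i, j) ∈ Δ) :
    tG Δ i j = PresentedGroup.of ⟨(i, j), h⟩ :=
  dif_pos h

lemma mk_tF (i j : Fin n) : PresentedGroup.mk (triRels Δ) (tF Δ i j) = tG Δ i j := by
  unfold tF tG
  split_ifs
  exacts [rfl, map_one _]

lemma triRel_tG {i j k : Fin n} (h : IsTriangle Δ i j k) : TriRel (tG Δ) i j k := by
  obtain ⟨hij, hik, hjk, h1, h2, h3, h4, h5, h6⟩ := h
  have := PresentedGroup.one_of_mem (rels := triRels Δ)
    ⟨i, j, k, hij, hik, hjk, h1, h2, h3, h4, h5, h6, rfl⟩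
  simp only [map_mul, map_inv, mk_tF] at this
  exact mul_inv_eq_one.1 this

def lift (t : Fin n → Fin n → G) (ht : ∀ i j k, IsTriangle Δ i j k → TriRel t i j k) :
    TriGroup Δ →* G :=
  PresentedGroup.toGroup (f := fun e : Δ => t e.1.1 e.1.2) <| by
    rintro _ ⟨i, j, k, hij, hik, hjk, h1, h2, h3, h4, h5, h6, rfl⟩
    have lift_tF : ∀ {a b}, (a, b) ∈ Δ → FreeGroup.lift (fun e : Δ => t e.1.1 e.1.2)
        (tF Δ a b) = t a b := fun hab => by rw [tF, dif_pos hab, FreeGroup.lift_apply_of]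
    simp only [map_mul, map_inv, lift_tF h1, lift_tF h2, lift_tF h3, lift_tF h4, lift_tF h5,
      lift_tF h6]
    exact mul_inv_eq_one.2 (ht i j k ⟨hij, hik, hjk, h1, h2, h3, h4, h5, h6⟩)

lemma lift_tG {t : Fin n → Fin n → G} {ht : ∀ i j k, IsTriangle Δ i j k → TriRel t i j k}
    {i j : Fin n} (h : (i, j) ∈ Δ) : lift t ht (tG Δ i j) = t i j := by
  rw [tG_of_mem h]
  exact PresentedGroup.toGroup.of _

lemma hom_ext {f g : TriGroup Δ →* G}
    (h : ∀ i j, (i, j) ∈ Δ → f (tG Δ i j) = g (tG Δ i j)) : f = g :=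
  PresentedGroup.ext fun ⟨⟨i, j⟩, hij⟩ => by simpa only [tG_of_mem hij] using h i j hij

def equivFreeGroupOfNoTriangle (h : ∀ i j k, ¬IsTriangle Δ i j k) :
    TriGroup Δ ≃* FreeGroup Δ :=
  MonoidHom.toMulEquiv
    (PresentedGroup.toGroup (f := FreeGroup.of) <| by
      rintro _ ⟨i, j, k, hij, hik, hjk, h1, h2, h3, h4, h5, h6, rfl⟩
      exact absurd ⟨hij, hik, hjk, h1, h2, h3, h4, h5, h6⟩ (h i j k))
    (PresentedGroup.mk _)
    (PresentedGroup.ext fun _ => rfl)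
    (FreeGroup.ext_hom _ _ fun _ => rfl)

end TriGroup

lemma isSide_fin_two {e : Fin 2 × Fin 2} (h : e.1 ≠ e.2) : IsSide e := by
  revert e
  unfold IsSide gap
  decide

def IsTriangulation.triGroupEquivOfTwo {Δ : Set (Fin 2 × Fin 2)} (hΔ : IsTriangulation Δ) :
    TriGroup Δ ≃* FreeGroup (Fin 2) :=
  (TriGroup.equivFreeGroupOfNoTriangle (by
    rintro i j k ⟨hij, hik, hjk, -⟩
    fin_cases i <;> fin_cases j <;> fin_cases k <;> simp_all)).trans <|
  FreeGroup.freeGroupCongr <|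
    (Equiv.subtypeEquivRight fun _ =>
      ⟨hΔ.fst_ne_snd, fun h => hΔ.mem_of_isSide (isSide_fin_two h)⟩).trans
    (Fintype.equivFinOfCardEq rfl)

end TriangleGroups

open scoped Monoid.Coprod

def freeGroupSumEquivCoprod {α β : Type*} : FreeGroup (α ⊕ β) ≃* FreeGroup α ∗ FreeGroup β :=
  MonoidHom.toMulEquiv
    (FreeGroup.lift <|
      Sum.elim (Monoid.Coprod.inl ∘ FreeGroup.of) (Monoid.Coprod.inr ∘ FreeGroup.of))
    (Monoid.Coprod.lift (FreeGroup.map Sum.inl) (FreeGroup.map Sum.inr))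
    (FreeGroup.ext_hom _ _ (by rintro (a | b) <;> rfl))
    (Monoid.Coprod.hom_ext (FreeGroup.ext_hom _ _ fun _ => rfl)
      (FreeGroup.ext_hom _ _ fun _ => rfl))

section EarRemoval

variable {m : ℕ}

lemma isTriangle_deleteVertex {Δ : Set (Fin (m + 1) × Fin (m + 1))} {v : Fin (m + 1)}
    {a b c : Fin m} :
    IsTriangle (deleteVertex v Δ) a b c ↔
      IsTriangle Δ (v.succAbove a) (v.succAbove b) (v.succAbove c) := by
  simp only [IsTriangle, deleteVertex, Set.mem_preimage, Prod.map,
    Fin.succAbove_right_injective.ne_iff]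

def TriGroup.deleteVertexHom (v : Fin (m + 1)) (Δ : Set (Fin (m + 1) × Fin (m + 1))) :
    TriGroup (deleteVertex v Δ) →* TriGroup Δ :=
  TriGroup.lift (fun a b => tG Δ (v.succAbove a) (v.succAbove b)) fun _ _ _ h =>
    TriGroup.triRel_tG (isTriangle_deleteVertex.1 h)

def TriGroup.ofCoprod (Δ : Set (Fin (m + 1) × Fin (m + 1))) (v p s : Fin (m + 1)) :
    TriGroup (deleteVertex v Δ) ∗ FreeGroup (Fin 3) →* TriGroup Δ :=
  Monoid.Coprod.lift (TriGroup.deleteVertexHom v Δ)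
    (FreeGroup.lift ![tG Δ p v, tG Δ v s, tG Δ s v])

lemma TriGroup.ofCoprod_inl_tG {Δ : Set (Fin (m + 1) × Fin (m + 1))} {v p s : Fin (m + 1)}
    {a b : Fin m} (hab : (a, b) ∈ deleteVertex v Δ) :
    TriGroup.ofCoprod Δ v p s (.inl (tG _ a b)) = tG Δ (v.succAbove a) (v.succAbove b) := by
  rw [TriGroup.ofCoprod, Monoid.Coprod.lift_apply_inl]
  exact TriGroup.lift_tG hab

lemma TriGroup.ofCoprod_inr_of {Δ : Set (Fin (m + 1) × Fin (m + 1))} {v p s : Fin (m + 1)}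
    (r : Fin 3) :
    TriGroup.ofCoprod Δ v p s (.inr (.of r)) = ![tG Δ p v, tG Δ v s, tG Δ s v] r := by
  rw [TriGroup.ofCoprod, Monoid.Coprod.lift_apply_inr, FreeGroup.lift_apply_of]

section

variable (Δ' : Set (Fin m × Fin m)) (v : Fin (m + 1)) (p' s' : Fin m)

/-- The images of the `t_ij` in `𝕋_{Δ'} ∗ F₃`, where `p = v.succAbove p'`, `s = v.succAbove s'`
and the generators `0, 1, 2` of `F₃` stand for `t_pv, t_vs, t_sv`; `t_vp` is eliminated by
solving the triangle relation of `p v s` for it. -/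
def earFamily : Fin (m + 1) → Fin (m + 1) → TriGroup Δ' ∗ FreeGroup (Fin 3) :=
  Fin.insertNth v
    (fun y => if y = v.succAbove p' then
        .inr (.of 1) * (.inl (tG Δ' p' s'))⁻¹ * .inr (.of 0) * (.inr (.of 2))⁻¹ *
          .inl (tG Δ' s' p')
      else .inr (.of 1))
    (fun i => Fin.insertNth v (if i = p' then .inr (.of 0) else .inr (.of 2))
      (fun j => .inl (tG Δ' i j)))

variable {Δ' v p' s'}

@[simp] lemma earFamily_succAbove_succAbove (i j : Fin m) :
    earFamily Δ' v p' s' (v.succAbove i) (v.succAbove j) = .inl (tG Δ' i j) := by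
  simp [earFamily]

@[simp] lemma earFamily_succAbove_self (i : Fin m) :
    earFamily Δ' v p' s' (v.succAbove i) v = if i = p' then .inr (.of 0) else .inr (.of 2) := by
  simp [earFamily]

@[simp] lemma earFamily_self (y : Fin (m + 1)) :
    earFamily Δ' v p' s' v y = if y = v.succAbove p' then
        .inr (.of 1) * (.inl (tG Δ' p' s'))⁻¹ * .inr (.of 0) * (.inr (.of 2))⁻¹ *
          .inl (tG Δ' s' p')
      else .inr (.of 1) := by
  simp [earFamily]

end

section

variable {Δ : Set (Fin (m + 1) × Fin (m + 1))} {v : Fin (m + 1)} {p' s' : Fin m}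
  (hΔ : IsTriangulation Δ) (h : IsEar Δ (v.succAbove p') v (v.succAbove s'))
include hΔ h

lemma IsEar.triRel_earFamily (i j k : Fin (m + 1)) (ht : IsTriangle Δ i j k) :
    TriRel (earFamily (deleteVertex v Δ) v p' s') i j k := by
  by_cases hv : i = v ∨ j = v ∨ k = v
  · obtain ⟨hi, hj, hk⟩ := h.mem_of_isTriangle hΔ ht hv
    refine TriRel.of_mem_triple ?_ hi hj hk ht.1 ht.2.1 ht.2.2.1
    have hsp' : s' ≠ p' := fun e => hΔ.fst_ne_snd h.diagonal_mem (by rw [e])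
    simp only [TriRel, earFamily_self, earFamily_succAbove_self, earFamily_succAbove_succAbove,
      if_pos, if_neg hsp', Fin.succAbove_right_injective.eq_iff]
    group
  · simp only [not_or] at hv
    obtain ⟨i', rfl⟩ := Fin.exists_succAbove_eq hv.1
    obtain ⟨j', rfl⟩ := Fin.exists_succAbove_eq hv.2.1
    obtain ⟨k', rfl⟩ := Fin.exists_succAbove_eq hv.2.2
    have := (TriGroup.triRel_tG (isTriangle_deleteVertex.2 ht)).map
      (Monoid.Coprod.inl (N := FreeGroup (Fin 3)))
    unfold TriRel at *
    simpa only [earFamily_succAbove_succAbove] using this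

def IsEar.toCoprod : TriGroup Δ →* TriGroup (deleteVertex v Δ) ∗ FreeGroup (Fin 3) :=
  TriGroup.lift _ (h.triRel_earFamily hΔ)

lemma IsEar.ofCoprod_comp_toCoprod :
    (TriGroup.ofCoprod Δ v (v.succAbove p') (v.succAbove s')).comp (h.toCoprod hΔ) =
      MonoidHom.id _ := by
  obtain ⟨-, -, -, -, -, hps, hsp, -, -⟩ := h.isTriangle hΔ
  have hsp' : s' ≠ p' := fun e => hΔ.fst_ne_snd hps (by rw [e])
  have nbr : ∀ {z}, (v, v.succAbove z) ∈ Δ → z = p' ∨ z = s' := fun hz =>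
    (h.eq_or_eq_of_mem _ hz).imp (fun e => Fin.succAbove_right_injective e)
      (fun e => Fin.succAbove_right_injective e)
  refine TriGroup.hom_ext fun x y hxy => ?_
  simp only [MonoidHom.comp_apply, MonoidHom.id_apply, IsEar.toCoprod, TriGroup.lift_tG hxy]
  rcases Fin.eq_self_or_eq_succAbove v x with hx | ⟨x', rfl⟩ <;>
    rcases Fin.eq_self_or_eq_succAbove v y with hy | ⟨y', rfl⟩
  · exact absurd (hx.trans hy.symm) (hΔ.fst_ne_snd hxy)
  · subst x
    rcases nbr hxy with rfl | rfl
    · simp [TriGroup.ofCoprod_inl_tG hps, TriGroup.ofCoprod_inl_tG hsp, TriGroup.ofCoprod_inr_of,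
        (TriGroup.triRel_tG (h.isTriangle hΔ)).solve]
    · simp [hsp', TriGroup.ofCoprod_inr_of]
  · subst y
    rcases nbr (hΔ.swap_mem hxy) with rfl | rfl
    · simp [TriGroup.ofCoprod_inr_of]
    · simp [hsp', TriGroup.ofCoprod_inr_of]
  · rw [earFamily_succAbove_succAbove, TriGroup.ofCoprod_inl_tG hxy]

lemma IsEar.toCoprod_comp_ofCoprod :
    (h.toCoprod hΔ).comp (TriGroup.ofCoprod Δ v (v.succAbove p') (v.succAbove s')) =
      MonoidHom.id _ := by
  obtain ⟨-, -, -, hpv, -, hps, -, hvs, hsv⟩ := h.isTriangle hΔ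
  have hsp' : s' ≠ p' := fun e => hΔ.fst_ne_snd hps (by rw [e])
  refine Monoid.Coprod.hom_ext (TriGroup.hom_ext fun a b hab => ?_)
    (FreeGroup.ext_hom _ _ fun r => ?_)
  · simp [TriGroup.ofCoprod_inl_tG hab, IsEar.toCoprod, TriGroup.lift_tG (Δ := Δ) hab]
  · fin_cases r <;>
      simp [TriGroup.ofCoprod_inr_of, IsEar.toCoprod, TriGroup.lift_tG hpv,
        TriGroup.lift_tG hvs, TriGroup.lift_tG hsv, hsp']

def IsEar.triGroupEquivCoprod : TriGroup Δ ≃* TriGroup (deleteVertex v Δ) ∗ FreeGroup (Fin 3) :=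
  MonoidHom.toMulEquiv _ _ (h.ofCoprod_comp_toCoprod hΔ) (h.toCoprod_comp_ofCoprod hΔ)

end

end EarRemoval

/-- For every `n ≥ 2` and every triangulation `Δ` of `[n]`, the triangle
group `𝕋_Δ` is a free group of rank `3n - 4`. -/
theorem triangle_group_is_free (n : ℕ) (hn : 2 ≤ n) (Δ : Set (Fin n × Fin n))
    (hΔ : IsTriangulation Δ) :
    Nonempty (TriGroup Δ ≃* FreeGroup (Fin (3 * n - 4))) := by
  induction n, hn using Nat.le_induction with
  | base => exact ⟨hΔ.triGroupEquivOfTwo⟩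
  | succ m hm ih =>
    obtain ⟨p, v, s, hear⟩ := hΔ.exists_isEar (by omega)
    obtain ⟨p', rfl⟩ := Fin.exists_succAbove_eq hear.left_ne
    obtain ⟨s', rfl⟩ := Fin.exists_succAbove_eq hear.right_ne
    obtain ⟨e⟩ := ih _ (hear.isTriangulation_deleteVertex hΔ)
    exact ⟨(hear.triGroupEquivCoprod hΔ).trans <|
      (MulEquiv.coprodCongr e (MulEquiv.refl _)).trans <| freeGroupSumEquivCoprod.symm.trans <|
        FreeGroup.freeGroupCongr (finSumFinEquiv.trans (finCongr (by omega)))⟩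

end NCPolygon
end
end

section
/- Let n ≥ 3, let Δ be a triangulation of [n], let Δ̲ ⊆ Δ be a directed triangulation, and fix i₀ ∈ [n]. Then 𝕋_Δ is freely generated by the elements t_{ij} with (i,j) ∈ Δ̲ \ {(i₀,i₀⁺)}; that is, the group homomorphism from the free group on the set Δ̲ \ {(i₀,i₀⁺)} to 𝕋_Δ sending each generator (i,j) to t_{ij} is an isomorphism. -/
/-!
Cut the polygon open between `i₀` and `i₀⁺`, so that the vertices get positions `0, …, n - 1`.
A chord `(x, y)` of `Δ` outside the basis `Δ̲ \ {(i₀, i₀⁺)}` spans at least one vertex, its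
reverse `(y, x)` lies in the basis, and it bounds a unique triangle `(x, c, y)` of `Δ` with `c`
strictly between `x` and `y`. The triangle relation of that triangle expresses `t_{xy}` through
`t_{yx}` and four shorter chords, so recursion on the length of chords writes every `t_{xy}` as a
word in the basis. In each triangle of `Δ` the longest side was rewritten through that very
triangle, so these words satisfy all triangle relations and define a homomorphism from `𝕋_Δ` to
the free group, inverse to the one in the theorem.
-/

open scoped Classical

noncomputable section

namespace NCPolygon

/-- A directed triangulation underlying `Δ`. -/
def IsDirectedTriangulation {n : ℕ} (Δ Δu : Set (Fin n × Fin n)) : Prop :=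
  Δu ⊆ Δ ∧ (∀ i : Fin n, (i, csucc i) ∈ Δu ∧ (i, cpred i) ∈ Δu) ∧
    ∀ p ∈ Δ, p.2 ≠ csucc p.1 → p.2 ≠ cpred p.1 → Xor' (p ∈ Δu) ((p.2, p.1) ∈ Δu)

def IsCyclic4 (w x y z : ℕ) : Prop :=
  w < x ∧ x < y ∧ y < z ∨ x < y ∧ y < z ∧ z < w ∨ y < z ∧ z < w ∧ w < x ∨ z < w ∧ w < x ∧ x < y

theorem IsCyclic4.add_mod {n w x y z : ℕ} (h : IsCyclic4 w x y z) (t : ℕ)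
    (hw : w < n) (hx : x < n) (hy : y < n) (hz : z < n) :
    IsCyclic4 ((w + t) % n) ((x + t) % n) ((y + t) % n) ((z + t) % n) := by
  have ht : t % n < n := Nat.mod_lt _ (by omega)
  simp only [Nat.add_mod_eq_ite, Nat.mod_eq_of_lt hw, Nat.mod_eq_of_lt hx, Nat.mod_eq_of_lt hy,
    Nat.mod_eq_of_lt hz]
  unfold IsCyclic4 at *
  split_ifs <;> omega

theorem isCyclicSeq_four_iff {n : ℕ} (a b c d : Fin n) :
    IsCyclicSeq [a, b, c, d] ↔ [a, b, c, d].Nodup ∧ IsCyclic4 a b c d := by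
  unfold IsCyclicSeq IsCyclic4
  refine and_congr_right fun _ => ⟨fun ⟨k, hk⟩ => ?_, fun h => ?_⟩
  · rw [← List.rotate_mod] at hk
    have : k % 4 < 4 := Nat.mod_lt _ (by omega)
    interval_cases k % 4 <;> simp [List.rotate, ← Fin.val_fin_lt] at hk <;> omega
  · rcases h with h | h | h | h
    · exact ⟨0, by simp [← Fin.val_fin_lt]; omega⟩
    · exact ⟨1, by simp [List.rotate, ← Fin.val_fin_lt]; omega⟩
    · exact ⟨2, by simp [List.rotate, ← Fin.val_fin_lt]; omega⟩
    · exact ⟨3, by simp [List.rotate, ← Fin.val_fin_lt]; omega⟩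

theorem val_csucc {n : ℕ} (x : Fin n) :
    (csucc x : ℕ) = x + 1 ∨ (x : ℕ) + 1 = n ∧ (csucc x : ℕ) = 0 := by
  have := x.isLt
  rcases (show (x : ℕ) + 1 < n ∨ (x : ℕ) + 1 = n by omega) with h | h
  · exact .inl (Nat.mod_eq_of_lt h)
  · exact .inr ⟨h, by simp [csucc, h]⟩

theorem val_cpred {n : ℕ} (x : Fin n) :
    (cpred x : ℕ) + 1 = x ∨ (x : ℕ) = 0 ∧ (cpred x : ℕ) + 1 = n := by
  have := x.isLt
  have : (cpred x : ℕ) = (x + (n - 1)) % n := rfl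
  rw [Nat.add_mod_eq_ite, Nat.mod_eq_of_lt x.isLt, Nat.mod_eq_of_lt (by omega : n - 1 < n)] at this
  split_ifs at this <;> omega

theorem csucc_cpred {n : ℕ} (x : Fin n) : csucc (cpred x) = x := by
  have := val_csucc (cpred x)
  have := val_cpred x
  have := x.isLt
  exact Fin.ext (by omega)

theorem cpred_csucc {n : ℕ} (x : Fin n) : cpred (csucc x) = x := by
  have := val_csucc x
  have := val_cpred (csucc x)
  have := x.isLt
  exact Fin.ext (by omega)

/-- The position of `x` once the polygon is cut open between `i₀` and `i₀⁺`:
`i₀⁺ ↦ 0, i₀⁺⁺ ↦ 1, …, i₀ ↦ n - 1`. -/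
def pos {n : ℕ} (i₀ x : Fin n) : ℕ := (x + (n - csucc i₀)) % n

theorem pos_lt {n : ℕ} (i₀ x : Fin n) : pos i₀ x < n := Nat.mod_lt _ x.pos

theorem pos_add_csucc {n : ℕ} (i₀ x : Fin n) :
    pos i₀ x + csucc i₀ = x ∨ pos i₀ x + csucc i₀ = x + n := by
  have := x.isLt
  rcases Nat.eq_zero_or_pos (csucc i₀ : ℕ) with h | h
  · simp [pos, h, Nat.mod_eq_of_lt x.isLt]
  · have : pos i₀ x = (x + (n - csucc i₀)) % n := rfl
    rw [Nat.add_mod_eq_ite, Nat.mod_eq_of_lt x.isLt,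
      Nat.mod_eq_of_lt (show n - csucc i₀ < n by omega)] at this
    split_ifs at this <;> omega

theorem pos_injective {n : ℕ} (i₀ : Fin n) : Function.Injective (pos i₀) := by
  intro x y h
  have := pos_add_csucc i₀ x
  have := pos_add_csucc i₀ y
  have := x.isLt
  have := y.isLt
  exact Fin.ext (by omega)

theorem pos_self {n : ℕ} (i₀ : Fin n) : pos i₀ i₀ = n - 1 := by
  have := pos_add_csucc i₀ i₀
  have := val_csucc i₀
  have := pos_lt i₀ i₀
  omega

theorem pos_csucc_self {n : ℕ} (i₀ : Fin n) : pos i₀ (csucc i₀) = 0 := by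
  have := pos_add_csucc i₀ (csucc i₀)
  have := pos_lt i₀ (csucc i₀)
  omega

theorem pos_csucc {n : ℕ} (i₀ x : Fin n) :
    pos i₀ (csucc x) = pos i₀ x + 1 ∨ pos i₀ x = n - 1 ∧ pos i₀ (csucc x) = 0 := by
  have := pos_add_csucc i₀ x
  have := pos_add_csucc i₀ (csucc x)
  have := val_csucc x
  have := val_csucc i₀
  have := pos_lt i₀ x
  have := pos_lt i₀ (csucc x)
  omega

theorem pos_add_mod {n : ℕ} (i₀ x : Fin n) : (pos i₀ x + csucc i₀) % n = x := by
  rcases pos_add_csucc i₀ x with h | h <;> rw [h] <;> simp [Nat.mod_eq_of_lt x.isLt]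

theorem crosses_swap {n : ℕ} {p q : Fin n × Fin n} (h : Crosses p q) : Crosses q p.swap := by
  rw [Crosses, isCyclicSeq_four_iff] at h ⊢
  refine ⟨(List.nodup_rotate (n := 1)).mpr h.1, ?_⟩
  unfold IsCyclic4 at *
  simp only [Prod.fst_swap, Prod.snd_swap]
  omega

theorem Crosses.isCyclic4_pos {n : ℕ} (i₀ : Fin n) {p q : Fin n × Fin n} (h : Crosses p q) :
    IsCyclic4 (pos i₀ p.1) (pos i₀ q.1) (pos i₀ p.2) (pos i₀ q.2) :=
  ((isCyclicSeq_four_iff _ _ _ _).mp h).2.add_mod _ p.1.isLt q.1.isLt p.2.isLt q.2.isLt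

theorem crosses_of_pos_lt {n : ℕ} {i₀ a b c d : Fin n} (hab : pos i₀ a < pos i₀ b)
    (hbc : pos i₀ b < pos i₀ c) (hcd : pos i₀ c < pos i₀ d) : Crosses (a, c) (b, d) := by
  have hne : ∀ {u v : Fin n}, pos i₀ u < pos i₀ v → u ≠ v := fun h e => (e ▸ h).false
  refine (isCyclicSeq_four_iff _ _ _ _).mpr ⟨?_, ?_⟩
  · simp [hne hab, hne hbc, hne hcd, hne (hab.trans hbc), hne (hbc.trans hcd),
      hne (hab.trans (hbc.trans hcd))]
  · have := IsCyclic4.add_mod (.inl ⟨hab, hbc, hcd⟩) (csucc i₀)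
      (pos_lt i₀ a) (pos_lt i₀ b) (pos_lt i₀ c) (pos_lt i₀ d)
    simpa only [pos_add_mod] using this

namespace IsTriangulation

variable {n : ℕ} {Δ : Set (Fin n × Fin n)}

theorem ne_of_mem (hΔ : IsTriangulation Δ) {a b : Fin n} (h : (a, b) ∈ Δ) : a ≠ b :=
  hΔ.1.1 _ h

theorem mem_of_forall_not_crosses_s1 (hΔ : IsTriangulation Δ) {p : Fin n × Fin n} (hp : p.1 ≠ p.2)
    (h : ∀ q ∈ Δ, ¬ Crosses p q ∧ ¬ Crosses q p) : p ∈ Δ := by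
  have hins : NonCrossing (insert p Δ) := by
    refine ⟨Set.forall_mem_insert.mpr ⟨hp, hΔ.1.1⟩, ?_⟩
    rintro r (rfl | hr) s (rfl | hs)
    · exact fun hc => by simpa [List.nodup_cons] using hc.1
    · exact (h s hs).1
    · exact (h r hr).2
    · exact hΔ.1.2 r hr s hs
  exact hΔ.2 _ hins (Set.subset_insert p Δ) ▸ Set.mem_insert p Δ

theorem swap_mem_s1 (hΔ : IsTriangulation Δ) {a b : Fin n} (hp : (a, b) ∈ Δ) : (b, a) ∈ Δ :=
  hΔ.mem_of_forall_not_crosses_s1 (hΔ.ne_of_mem hp).symm fun q hq =>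
    ⟨fun hc => hΔ.1.2 q hq _ hp (crosses_swap hc),
      fun hc => hΔ.1.2 _ hp q hq (crosses_swap (crosses_swap (crosses_swap hc)))⟩

theorem not_interleaved (hΔ : IsTriangulation Δ) {i₀ a b c d : Fin n} (hac : (a, c) ∈ Δ)
    (hbd : (b, d) ∈ Δ) (hab : pos i₀ a < pos i₀ b) (hbc : pos i₀ b < pos i₀ c)
    (hcd : pos i₀ c < pos i₀ d) : False :=
  hΔ.1.2 _ hac _ hbd (crosses_of_pos_lt hab hbc hcd)

theorem csucc_mem (hΔ : IsTriangulation Δ) (hn : 2 ≤ n) (a : Fin n) : (a, csucc a) ∈ Δ := by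
  have h1 := pos_self a
  have h2 := pos_csucc_self a
  refine hΔ.mem_of_forall_not_crosses_s1 (fun h => ?_) fun q _ => ⟨fun hc => ?_, fun hc => ?_⟩
  · have : pos a a = pos a (csucc a) := congrArg (pos a) h
    omega
  all_goals
    have hcyc := hc.isCyclic4_pos a
    have := pos_lt a q.1
    have := pos_lt a q.2
    simp only [IsCyclic4, h1, h2] at hcyc
    omega

theorem mem_of_forall_pos_mem_Icc (hΔ : IsTriangulation Δ) {i₀ c b : Fin n}
    (hcb : pos i₀ c < pos i₀ b)
    (h : ∀ u v, (u, v) ∈ Δ → pos i₀ c < pos i₀ u → pos i₀ u < pos i₀ b →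
      pos i₀ c ≤ pos i₀ v ∧ pos i₀ v ≤ pos i₀ b) :
    (c, b) ∈ Δ := by
  refine hΔ.mem_of_forall_not_crosses_s1 (fun e => hcb.ne (congrArg (pos i₀) e))
    fun q hq => ⟨fun hc => ?_, fun hc => ?_⟩
  · have hcyc := hc.isCyclic4_pos i₀
    have := h q.1 q.2 hq
    simp only [IsCyclic4] at hcyc
    omega
  · have hcyc := hc.isCyclic4_pos i₀
    have := h q.2 q.1 (hΔ.swap_mem_s1 hq)
    simp only [IsCyclic4] at hcyc
    omega

theorem exists_apex_of_lt (hΔ : IsTriangulation Δ) {i₀ a b : Fin n} (hab : (a, b) ∈ Δ)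
    (hlt : pos i₀ a + 1 < pos i₀ b) :
    ∃ c, pos i₀ a < pos i₀ c ∧ pos i₀ c < pos i₀ b ∧ (a, c) ∈ Δ ∧ (c, b) ∈ Δ := by
  have hb := pos_lt i₀ b
  let T := Finset.univ.filter fun c => pos i₀ a < pos i₀ c ∧ pos i₀ c < pos i₀ b ∧ (a, c) ∈ Δ
  have hsucc : csucc a ∈ T := by
    have := pos_csucc i₀ a
    simp only [T, Finset.mem_filter, Finset.mem_univ, true_and]
    exact ⟨by omega, by omega, hΔ.csucc_mem (by omega) a⟩
  obtain ⟨c, hcT, hmax⟩ := T.exists_max_image (pos i₀) ⟨_, hsucc⟩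
  simp only [T, Finset.mem_filter, Finset.mem_univ, true_and] at hcT hmax
  obtain ⟨hac1, hcb1, hac⟩ := hcT
  refine ⟨c, hac1, hcb1, hac, hΔ.mem_of_forall_pos_mem_Icc hcb1 fun u v huv hcu hub => ?_⟩
  by_contra hv
  rcases lt_trichotomy (pos i₀ v) (pos i₀ a) with hva | hva | hva
  · exact hΔ.not_interleaved (hΔ.swap_mem_s1 huv) hab hva (by omega) hub
  · obtain rfl := pos_injective i₀ hva
    have := hmax u ⟨by omega, hub, hΔ.swap_mem_s1 huv⟩
    omega
  · rcases lt_or_ge (pos i₀ v) (pos i₀ c) with hvc | hvc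
    · exact hΔ.not_interleaved hac (hΔ.swap_mem_s1 huv) hva hvc hcu
    · exact hΔ.not_interleaved hab huv (by omega) hub (by omega)

theorem exists_apex (hΔ : IsTriangulation Δ) {i₀ x y : Fin n} (hxy : (x, y) ∈ Δ)
    (hgap : min (pos i₀ x) (pos i₀ y) + 1 < max (pos i₀ x) (pos i₀ y)) :
    ∃ c, min (pos i₀ x) (pos i₀ y) < pos i₀ c ∧ pos i₀ c < max (pos i₀ x) (pos i₀ y) ∧
      (x, c) ∈ Δ ∧ (y, c) ∈ Δ := by
  wlog hlt : pos i₀ x < pos i₀ y generalizing x y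
  · obtain ⟨c, hc⟩ := this (hΔ.swap_mem_s1 hxy) (by omega) (by omega)
    rw [min_comm, max_comm]
    exact ⟨c, hc.1, hc.2.1, hc.2.2.2, hc.2.2.1⟩
  obtain ⟨c, hxc, hcy, hxc', hcy'⟩ := hΔ.exists_apex_of_lt (i₀ := i₀) hxy (by omega)
  exact ⟨c, by omega, by omega, hxc', hΔ.swap_mem_s1 hcy'⟩

theorem apex_unique (hΔ : IsTriangulation Δ) {i₀ x y c c' : Fin n}
    (hc : min (pos i₀ x) (pos i₀ y) < pos i₀ c ∧ pos i₀ c < max (pos i₀ x) (pos i₀ y))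
    (hc' : min (pos i₀ x) (pos i₀ y) < pos i₀ c' ∧ pos i₀ c' < max (pos i₀ x) (pos i₀ y))
    (hxc : (x, c) ∈ Δ) (hyc : (y, c) ∈ Δ) (hxc' : (x, c') ∈ Δ) (hyc' : (y, c') ∈ Δ) :
    c = c' := by
  wlog hlt : pos i₀ c < pos i₀ c' generalizing c c'
  · rcases (not_lt.mp hlt).lt_or_eq with h | h
    · exact (this hc' hc hxc' hyc' hxc hyc h).symm
    · exact pos_injective i₀ h.symm
  exfalso
  rcases le_total (pos i₀ x) (pos i₀ y) with hxy | hxy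
  · exact hΔ.not_interleaved hxc' (hΔ.swap_mem_s1 hyc) (by omega) hlt (by omega)
  · exact hΔ.not_interleaved hyc' (hΔ.swap_mem_s1 hxc) (by omega) hlt (by omega)

end IsTriangulation

abbrev freeGens {n : ℕ} (Δu : Set (Fin n × Fin n)) (i₀ : Fin n) : Set (Fin n × Fin n) :=
  Δu \ {(i₀, csucc i₀)}

theorem mem_freeGens {n : ℕ} {Δu : Set (Fin n × Fin n)} {i₀ x y : Fin n} :
    (x, y) ∈ freeGens Δu i₀ ↔ (x, y) ∈ Δu ∧ ¬ (x = i₀ ∧ y = csucc i₀) := by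
  simp

namespace IsDirectedTriangulation

variable {n : ℕ} {Δ Δu : Set (Fin n × Fin n)}

theorem csucc_swap_mem (hΔu : IsDirectedTriangulation Δ Δu) (x : Fin n) : (csucc x, x) ∈ Δu := by
  simpa only [cpred_csucc] using (hΔu.2.1 (csucc x)).2

theorem mem_of_pos_eq_succ (hΔu : IsDirectedTriangulation Δ Δu) {i₀ x y : Fin n}
    (h : pos i₀ y = pos i₀ x + 1) : (x, y) ∈ Δu ∧ (y, x) ∈ Δu := by
  have := pos_csucc i₀ x
  have := pos_lt i₀ y
  obtain rfl : csucc x = y := pos_injective i₀ (by omega)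
  exact ⟨(hΔu.2.1 x).1, hΔu.csucc_swap_mem x⟩

theorem pos_gap_of_not_mem_freeGens (hn : 3 ≤ n) (hΔu : IsDirectedTriangulation Δ Δu)
    {i₀ x y : Fin n} (hxy : x ≠ y) (h : (x, y) ∉ freeGens Δu i₀) :
    min (pos i₀ x) (pos i₀ y) + 1 < max (pos i₀ x) (pos i₀ y) := by
  have hne : pos i₀ x ≠ pos i₀ y := (pos_injective i₀).ne hxy
  have := pos_self i₀
  have := pos_csucc_self i₀
  have := pos_lt i₀ y
  rw [mem_freeGens, not_and, not_not] at h
  by_contra! hgap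
  rcases (show pos i₀ y = pos i₀ x + 1 ∨ pos i₀ x = pos i₀ y + 1 by omega) with hs | hs
  · obtain ⟨rfl, -⟩ := h (hΔu.mem_of_pos_eq_succ hs).1
    omega
  · obtain ⟨rfl, rfl⟩ := h (hΔu.mem_of_pos_eq_succ hs).2
    omega

theorem mem_freeGens_iff_swap_not_mem (hΔu : IsDirectedTriangulation Δ Δu) {i₀ x y : Fin n}
    (hxy : (x, y) ∈ Δ) (hgap : min (pos i₀ x) (pos i₀ y) + 1 < max (pos i₀ x) (pos i₀ y)) :
    (x, y) ∈ freeGens Δu i₀ ↔ (y, x) ∉ freeGens Δu i₀ := by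
  have h0 := pos_self i₀
  have h1 := pos_csucc_self i₀
  have hx := pos_lt i₀ x
  have hy := pos_lt i₀ y
  have hback := hΔu.csucc_swap_mem i₀
  simp only [mem_freeGens]
  by_cases hwrap : pos i₀ x = n - 1 ∧ pos i₀ y = 0 ∨ pos i₀ x = 0 ∧ pos i₀ y = n - 1
  · have hne : csucc i₀ ≠ i₀ := fun he => by
      have := congrArg (pos i₀) he
      omega
    rcases hwrap with ⟨hx0, hy0⟩ | ⟨hx0, hy0⟩
    · simp [pos_injective i₀ (hx0.trans h0.symm), pos_injective i₀ (hy0.trans h1.symm), hback,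
        hne]
    · simp [pos_injective i₀ (hy0.trans h0.symm), pos_injective i₀ (hx0.trans h1.symm), hback,
        hne]
  · have hsucc : ∀ {u v : Fin n}, v = csucc u → pos i₀ v = pos i₀ u + 1 ∨
        pos i₀ u = n - 1 ∧ pos i₀ v = 0 := fun h => h ▸ pos_csucc i₀ _
    have hxor := hΔu.2.2 (x, y) hxy (fun h : y = csucc x => by have := hsucc h; omega)
      (fun h : y = cpred x => by have := hsucc (show x = csucc y by rw [h, csucc_cpred]); omega)
    have hxy' : ¬ (x = i₀ ∧ y = csucc i₀) := by
      rintro ⟨rfl, rfl⟩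
      omega
    have hyx' : ¬ (y = i₀ ∧ x = csucc i₀) := by
      rintro ⟨rfl, rfl⟩
      omega
    simpa only [hxy', hyx', not_false_eq_true, and_true] using xor_iff_iff_not.mp hxor

theorem swap_mem_freeGens (hn : 3 ≤ n) (hΔ : IsTriangulation Δ)
    (hΔu : IsDirectedTriangulation Δ Δu) {i₀ x y : Fin n} (hxy : (x, y) ∈ Δ)
    (h : (x, y) ∉ freeGens Δu i₀) : (y, x) ∈ freeGens Δu i₀ := by
  by_contra h'
  exact h ((hΔu.mem_freeGens_iff_swap_not_mem hxy
    (hΔu.pos_gap_of_not_mem_freeGens hn (hΔ.ne_of_mem hxy) h)).mpr h')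

end IsDirectedTriangulation

def TriangleRel {α G : Type*} [Group G] (t : α → α → G) (i j k : α) : Prop :=
  t i j * (t k j)⁻¹ * t k i = t i k * (t j k)⁻¹ * t j i

theorem TriangleRel.symm {α G : Type*} [Group G] {t : α → α → G} {i j k : α}
    (h : TriangleRel t i j k) : TriangleRel t i k j :=
  Eq.symm h

theorem TriangleRel.rotate {α G : Type*} [Group G] {t : α → α → G} {i j k : α}
    (h : TriangleRel t i j k) : TriangleRel t j k i := by
  unfold TriangleRel at *
  rw [show t i j = t i k * (t j k)⁻¹ * t j i * (t k i)⁻¹ * t k j by rw [← h]; group]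
  group

theorem tF_of_mem {n : ℕ} {Δ : Set (Fin n × Fin n)} {a b : Fin n} (h : (a, b) ∈ Δ) :
    tF Δ a b = FreeGroup.of ⟨(a, b), h⟩ :=
  dif_pos h

theorem mk_tF {n : ℕ} (Δ : Set (Fin n × Fin n)) (a b : Fin n) :
    PresentedGroup.mk (triRels Δ) (tF Δ a b) = tG Δ a b := by
  unfold tF tG
  split_ifs <;> rfl

theorem tG_of_mem {n : ℕ} {Δ : Set (Fin n × Fin n)} {a b : Fin n} (h : (a, b) ∈ Δ) :
    tG Δ a b = PresentedGroup.of ⟨(a, b), h⟩ :=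
  dif_pos h

theorem tG_triangleRel {n : ℕ} {Δ : Set (Fin n × Fin n)} (hΔ : IsTriangulation Δ)
    {i j k : Fin n} (hij : (i, j) ∈ Δ) (hjk : (j, k) ∈ Δ) (hki : (k, i) ∈ Δ) :
    TriangleRel (tG Δ) i j k := by
  have hmem : tF Δ i j * (tF Δ k j)⁻¹ * tF Δ k i * (tF Δ i k * (tF Δ j k)⁻¹ * tF Δ j i)⁻¹ ∈
      triRels Δ := ⟨i, j, k, hΔ.ne_of_mem hij, (hΔ.ne_of_mem hki).symm, hΔ.ne_of_mem hjk, hij,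
      hΔ.swap_mem_s1 hij, hΔ.swap_mem_s1 hki, hki, hjk, hΔ.swap_mem_s1 hjk, rfl⟩
  simpa only [TriangleRel, map_mul, map_inv, mk_tF] using
    PresentedGroup.mk_eq_mk_of_mul_inv_mem hmem

/-- The last branch is never taken for chords of `Δ` (`IsTriangulation.exists_apex`). -/
def basisWord {n : ℕ} (Δ Δu : Set (Fin n × Fin n)) (i₀ x y : Fin n) :
    FreeGroup (freeGens Δu i₀) :=
  if (x, y) ∈ freeGens Δu i₀ then tF _ x y
  else if h : ∃ c, min (pos i₀ x) (pos i₀ y) < pos i₀ c ∧ pos i₀ c < max (pos i₀ x) (pos i₀ y) ∧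
      (x, c) ∈ Δ ∧ (y, c) ∈ Δ then
    basisWord Δ Δu i₀ x h.choose * (basisWord Δ Δu i₀ y h.choose)⁻¹ * tF _ y x *
      (basisWord Δ Δu i₀ h.choose x)⁻¹ * basisWord Δ Δu i₀ h.choose y
  else 1
termination_by max (pos i₀ x) (pos i₀ y) - min (pos i₀ x) (pos i₀ y)
decreasing_by all_goals (obtain ⟨_, _, _⟩ := h.choose_spec; omega)

section basisWord

variable {n : ℕ} {Δ Δu : Set (Fin n × Fin n)} {i₀ : Fin n}

theorem basisWord_of_mem {x y : Fin n} (h : (x, y) ∈ freeGens Δu i₀) :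
    basisWord Δ Δu i₀ x y = tF _ x y := by
  rw [basisWord, if_pos h]

theorem basisWord_of_apex (hΔ : IsTriangulation Δ) {x y c : Fin n}
    (hxy : (x, y) ∉ freeGens Δu i₀)
    (hc : min (pos i₀ x) (pos i₀ y) < pos i₀ c ∧ pos i₀ c < max (pos i₀ x) (pos i₀ y))
    (hxc : (x, c) ∈ Δ) (hyc : (y, c) ∈ Δ) :
    basisWord Δ Δu i₀ x y = basisWord Δ Δu i₀ x c * (basisWord Δ Δu i₀ y c)⁻¹ * tF _ y x *
      (basisWord Δ Δu i₀ c x)⁻¹ * basisWord Δ Δu i₀ c y := by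
  have hex : ∃ c, min (pos i₀ x) (pos i₀ y) < pos i₀ c ∧ pos i₀ c < max (pos i₀ x) (pos i₀ y) ∧
      (x, c) ∈ Δ ∧ (y, c) ∈ Δ := ⟨c, hc.1, hc.2, hxc, hyc⟩
  obtain ⟨h1, h2, h3, h4⟩ := hex.choose_spec
  rw [basisWord, if_neg hxy, dif_pos hex, hΔ.apex_unique ⟨h1, h2⟩ hc h3 h4 hxc hyc]

theorem basisWord_triangleRel_of_between (hΔ : IsTriangulation Δ)
    (hΔu : IsDirectedTriangulation Δ Δu) {a b c : Fin n} (hab : (a, b) ∈ Δ) (hac : (a, c) ∈ Δ)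
    (hbc : (b, c) ∈ Δ)
    (hc : min (pos i₀ a) (pos i₀ b) < pos i₀ c ∧ pos i₀ c < max (pos i₀ a) (pos i₀ b)) :
    TriangleRel (basisWord Δ Δu i₀) a b c := by
  have hgap : min (pos i₀ a) (pos i₀ b) + 1 < max (pos i₀ a) (pos i₀ b) := by omega
  have hiff := hΔu.mem_freeGens_iff_swap_not_mem hab hgap
  unfold TriangleRel
  by_cases hs : (a, b) ∈ freeGens Δu i₀
  · rw [min_comm, max_comm] at hc
    rw [basisWord_of_apex hΔ (hiff.mp hs) hc hbc hac, basisWord_of_mem hs]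
    group
  · rw [basisWord_of_apex hΔ hs hc hac hbc, basisWord_of_mem (not_not.mp (mt hiff.mpr hs))]
    group

theorem basisWord_triangleRel (hΔ : IsTriangulation Δ) (hΔu : IsDirectedTriangulation Δ Δu)
    {i j k : Fin n} (hij : (i, j) ∈ Δ) (hjk : (j, k) ∈ Δ) (hki : (k, i) ∈ Δ) :
    TriangleRel (basisWord Δ Δu i₀) i j k := by
  have := (pos_injective i₀).ne (hΔ.ne_of_mem hij)
  have := (pos_injective i₀).ne (hΔ.ne_of_mem hjk)
  have := (pos_injective i₀).ne (hΔ.ne_of_mem hki)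
  rcases (show (min (pos i₀ i) (pos i₀ j) < pos i₀ k ∧ pos i₀ k < max (pos i₀ i) (pos i₀ j)) ∨
      (min (pos i₀ i) (pos i₀ k) < pos i₀ j ∧ pos i₀ j < max (pos i₀ i) (pos i₀ k)) ∨
      (min (pos i₀ j) (pos i₀ k) < pos i₀ i ∧ pos i₀ i < max (pos i₀ j) (pos i₀ k)) by omega)
    with h | h | h
  · exact basisWord_triangleRel_of_between hΔ hΔu hij (hΔ.swap_mem_s1 hki) hjk h
  · exact (basisWord_triangleRel_of_between hΔ hΔu (hΔ.swap_mem_s1 hki) hij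
      (hΔ.swap_mem_s1 hjk) h).symm
  · exact (basisWord_triangleRel_of_between hΔ hΔu hjk (hΔ.swap_mem_s1 hij) hki h).rotate.rotate

theorem lift_basisWord (hn : 3 ≤ n) (hΔ : IsTriangulation Δ) (hΔu : IsDirectedTriangulation Δ Δu)
    {x y : Fin n} (hxy : (x, y) ∈ Δ) :
    FreeGroup.lift (fun p : freeGens Δu i₀ => tG Δ p.1.1 p.1.2) (basisWord Δ Δu i₀ x y) =
      tG Δ x y := by
  induction hd : max (pos i₀ x) (pos i₀ y) - min (pos i₀ x) (pos i₀ y)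
    using Nat.strong_induction_on generalizing x y with
  | _ d ih =>
  by_cases hs : (x, y) ∈ freeGens Δu i₀
  · rw [basisWord_of_mem hs, tF_of_mem hs, FreeGroup.lift_apply_of]
  obtain ⟨c, hc1, hc2, hxc, hyc⟩ :=
    hΔ.exists_apex hxy (hΔu.pos_gap_of_not_mem_freeGens hn (hΔ.ne_of_mem hxy) hs)
  rw [basisWord_of_apex hΔ hs ⟨hc1, hc2⟩ hxc hyc]
  simp only [map_mul, map_inv, tF_of_mem (hΔu.swap_mem_freeGens hn hΔ hxy hs),
    FreeGroup.lift_apply_of]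
  rw [ih _ (by omega) hxc rfl, ih _ (by omega) hyc rfl, ih _ (by omega) (hΔ.swap_mem_s1 hxc) rfl,
    ih _ (by omega) (hΔ.swap_mem_s1 hyc) rfl,
    tG_triangleRel hΔ hxc (hΔ.swap_mem_s1 hyc) (hΔ.swap_mem_s1 hxy)]
  group

end basisWord

def toFreeGroup {n : ℕ} {Δ Δu : Set (Fin n × Fin n)} (hΔ : IsTriangulation Δ)
    (hΔu : IsDirectedTriangulation Δ Δu) (i₀ : Fin n) :
    TriGroup Δ →* FreeGroup (freeGens Δu i₀) :=
  PresentedGroup.toGroup (f := fun p : Δ => basisWord Δ Δu i₀ p.1.1 p.1.2) <| by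
    rintro - ⟨i, j, k, -, -, -, hij, hji, hik, hki, hjk, hkj, rfl⟩
    simp only [map_mul, map_inv, tF_of_mem hij, tF_of_mem hji, tF_of_mem hik, tF_of_mem hki,
      tF_of_mem hjk, tF_of_mem hkj, FreeGroup.lift_apply_of]
    exact mul_inv_eq_one.mpr (basisWord_triangleRel hΔ hΔu hij hjk hki)

theorem toFreeGroup_tG {n : ℕ} {Δ Δu : Set (Fin n × Fin n)} (hΔ : IsTriangulation Δ)
    (hΔu : IsDirectedTriangulation Δ Δu) (i₀ : Fin n) {a b : Fin n} (h : (a, b) ∈ Δ) :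
    toFreeGroup hΔ hΔu i₀ (tG Δ a b) = basisWord Δ Δu i₀ a b := by
  rw [tG_of_mem h, toFreeGroup, PresentedGroup.toGroup.of]

/-- For `n ≥ 3`, a triangulation `Δ` of `[n]`, a directed triangulation
`Δ̲ ⊆ Δ` and `i₀ ∈ [n]`, the group `𝕋_Δ` is freely generated by the `t_{ij}` with
`(i,j) ∈ Δ̲ \ {(i₀, i₀⁺)}`. -/
theorem triangle_group_free_basis (n : ℕ) (hn : 3 ≤ n)
    (Δ Δu : Set (Fin n × Fin n)) (hΔ : IsTriangulation Δ)
    (hΔu : IsDirectedTriangulation Δ Δu) (i₀ : Fin n) :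
    Function.Bijective
      (⇑(FreeGroup.lift (fun p : ↥(Δu \ {(i₀, csucc i₀)}) =>
          tG Δ (↑p : Fin n × Fin n).1 (↑p : Fin n × Fin n).2))) := by
  set φ := FreeGroup.lift fun p : freeGens Δu i₀ => tG Δ p.1.1 p.1.2
  have hψφ : (toFreeGroup hΔ hΔu i₀).comp φ = MonoidHom.id _ := FreeGroup.ext_hom _ _ fun p => by
    simp [φ, toFreeGroup_tG hΔ hΔu i₀ (hΔu.1 p.2.1), basisWord_of_mem p.2, tF_of_mem p.2]
  have hφψ : φ.comp (toFreeGroup hΔ hΔu i₀) = MonoidHom.id _ := PresentedGroup.ext fun p => by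
    simp [φ, ← tG_of_mem p.2, toFreeGroup_tG hΔ hΔu i₀ p.2, lift_basisWord hn hΔ hΔu p.2]
  exact (φ.toMulEquiv _ hψφ hφψ).bijective

end NCPolygon
end
end

section
/- In the algebra 𝒜_n (n ≥ 3), for all integers i,j with 2 ≤ i < j ≤ n−1 one has the identity x_{ij} = Σ_{k=i}^{j−1} x_{i1} · T_1^{k,k+1} · x_{1j}, where T_1^{k,k+1} = x_{k1}⁻¹ x_{k,k+1} x_{1,k+1}⁻¹; equivalently, x_{ij} = Σ_{k=i}^{j−1} x_{i1} x_{k1}⁻¹ x_{k,k+1} x_{1,k+1}⁻¹ x_{1j}. -/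
/-!
Multiplying by `x_{i1}⁻¹` on the left and `x_{1j}⁻¹` on the right turns the expansion into
`T_1^{ij} = Σ_{k=i}^{j-1} T_1^{k,k+1}`. The exchange relation for a cyclic quadruple
`(1, i, k, l)`, multiplied in the same way by `x_{i1}⁻¹` and `x_{1l}⁻¹`, says exactly that
angles at `1` are additive, `T_1^{il} = T_1^{ik} + T_1^{kl}`, so the sum telescopes.
In the code the vertex `1` of the paper is `0 : Fin n`.
-/

open scoped Classical

noncomputable section

namespace NCPolygon

variable {n : ℕ}

lemma X_mul_Xinv {i j : Fin n} (h : i ≠ j) : X i j * Xinv i j = 1 := by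
  simpa [X, Xinv] using RingQuot.mkAlgHom_rel ℚ (ARel.mul_inv h)

lemma Xinv_mul_X {i j : Fin n} (h : i ≠ j) : Xinv i j * X i j = 1 := by
  simpa [X, Xinv] using RingQuot.mkAlgHom_rel ℚ (ARel.inv_mul h)

lemma X_exchange {i j k l : Fin n} (h : IsCyclicSeq [i, j, k, l]) :
    X j l = X j k * Xinv i k * X i l + X j i * Xinv k i * X k l := by
  simpa [X, Xinv] using RingQuot.mkAlgHom_rel ℚ (ARel.exchange h)

lemma isCyclicSeq_of_lt {a b c d : Fin n} (hab : a < b) (hbc : b < c) (hcd : c < d) :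
    IsCyclicSeq [a, b, c, d] := by
  have hsorted : [a, b, c, d].Pairwise (· < ·) := by
    simp only [List.pairwise_cons, List.mem_cons, List.not_mem_nil, forall_eq_or_imp,
      forall_eq, List.Pairwise.nil, or_false, IsEmpty.forall_iff, implies_true, and_true]
    exact ⟨⟨hab, hab.trans hbc, (hab.trans hbc).trans hcd⟩, ⟨hbc, hbc.trans hcd⟩, hcd⟩
  exact ⟨hsorted.nodup, 0, by simpa using hsorted⟩

lemma csucc_val_of_lt {k : Fin n} (h : k.val + 1 < n) : (csucc k).val = k.val + 1 :=
  Nat.mod_eq_of_lt h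

theorem Tang_add {z i k l : Fin n} (h : IsCyclicSeq [z, i, k, l]) :
    Tang z i l = Tang z i k + Tang z k l := by
  have hnodup := h.1
  simp only [List.nodup_cons, List.mem_cons, List.not_mem_nil, not_or] at hnodup
  obtain ⟨⟨hzi, -, hzl, -⟩, -⟩ := hnodup
  simp only [Tang, X_exchange h, mul_add, add_mul, mul_assoc, X_mul_Xinv hzl,
    ← mul_assoc (Xinv i z) (X i z), Xinv_mul_X (Ne.symm hzi), mul_one, one_mul]

lemma X_eq_X_mul_Tang_mul_X {z i j : Fin n} (hiz : i ≠ z) (hzj : z ≠ j) :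
    X i j = X i z * Tang z i j * X z j := by
  simp only [Tang, mul_assoc, Xinv_mul_X hzj, mul_one, ← mul_assoc (X i z), X_mul_Xinv hiz,
    one_mul]

lemma filter_Ico_succ_right {i k j : Fin n} (hik : i ≤ k) (hj : j.val = k.val + 1) :
    Finset.univ.filter (fun m : Fin n => i ≤ m ∧ m < j) =
      insert k (Finset.univ.filter (fun m : Fin n => i ≤ m ∧ m < k)) := by
  ext m
  simp only [Finset.mem_filter, Finset.mem_univ, Finset.mem_insert, true_and, Fin.le_def,
    Fin.lt_def, Fin.ext_iff] at hik hj ⊢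
  omega

theorem Tang_eq_sum_Tang_csucc {z i : Fin n} (hzi : z < i) :
    ∀ j : Fin n, i < j →
      Tang z i j = ∑ k ∈ Finset.univ.filter (fun k : Fin n => i ≤ k ∧ k < j), Tang z k (csucc k)
  | ⟨0, _⟩, hij => absurd hij (Nat.not_lt_zero _)
  | ⟨m + 1, hm⟩, hij => by
    set k : Fin n := ⟨m, by omega⟩
    have hik : i ≤ k := Fin.le_def.2 (Nat.le_of_lt_succ hij)
    have hk : csucc k = ⟨m + 1, hm⟩ := Fin.ext (csucc_val_of_lt hm)
    rw [filter_Ico_succ_right hik rfl, Finset.sum_insert (by simp), hk]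
    rcases hik.lt_or_eq with hik | hik
    · rw [Tang_add (isCyclicSeq_of_lt hzi hik (Fin.lt_def.2 (Nat.lt_succ_self m))),
        Tang_eq_sum_Tang_csucc hzi k hik, add_comm]
    · rw [← hik, left_eq_add]
      exact Finset.sum_eq_zero fun x hx => by
        simp only [Finset.mem_filter] at hx
        exact absurd hx.2.2 hx.2.1.not_gt

/-- In `𝒜_n`, for `2 ≤ i < j ≤ n-1` (here `Fin n` is the vertex set
`[n]` relabelled `0, …, n-1`, so vertex `1` is `⟨0, _⟩` and the hypotheses read
`1 ≤ i`, `i < j`, `j ≤ n-2`):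
`x_{ij} = Σ_{k=i}^{j-1} x_{i1} · x_{k1}⁻¹ x_{k,k+1} x_{1,k+1}⁻¹ · x_{1j}`. -/
theorem star_laurent_expansion (n : ℕ) (i j : Fin n)
    (h1 : 1 ≤ (i : ℕ)) (hij : i < j) :
    X i j = ∑ k ∈ Finset.univ.filter (fun k : Fin n => i ≤ k ∧ k < j),
      X i ⟨0, by omega⟩ * Xinv k ⟨0, by omega⟩ * X k (csucc k) *
        Xinv ⟨0, by omega⟩ (csucc k) * X ⟨0, by omega⟩ j := by
  set z : Fin n := ⟨0, by omega⟩
  have hzi : z < i := Fin.lt_def.2 h1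
  rw [X_eq_X_mul_Tang_mul_X hzi.ne' (hzi.trans hij).ne, Tang_eq_sum_Tang_csucc hzi j hij,
    Finset.mul_sum, Finset.sum_mul]
  simp only [Tang, mul_assoc]

end NCPolygon
end
end
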